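/- Fix a real number λ, a nonnegative integer r, and an integer p. For each k ≥ 0 let β^{(p)}_{k,λ}(−r) = (−1)^k Σ_{j=0}^{k} ( ∏_{i=1}^{j} (λ − i) ) · {k+r, j+r}_{r,λ} / (j+1)^p (the value at −r of the degenerate poly-Bernoulli polynomial of index p), where the empty product for j = 0 equals 1 and (j+1)^p denotes the integer power of the real number j+1. Then for every n ≥ 0, (−1)^n ( ∏_{i=1}^{n} (λ − i) ) / (n+1)^p = Σ_{k=0}^{n} [n+r, k+r]_{r,λ} β^{(p)}_{k,λ}(−r). -/

import Mathlib

open Finset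

/-- The degenerate falling factorial `(x)_{n,λ} = x(x-λ)(x-2λ)⋯(x-(n-1)λ)`. -/
noncomputable def degFall (lam x : ℝ) (n : ℕ) : ℝ := ∏ i ∈ Finset.range n, (x - i * lam)

/-- The degenerate rising factorial `⟨x⟩_{n,λ} = x(x+λ)(x+2λ)⋯(x+(n-1)λ)`. -/
noncomputable def degRise (lam x : ℝ) (n : ℕ) : ℝ := ∏ i ∈ Finset.range n, (x + i * lam)

/-!
Substituting `x = -u - r` in the defining identity of `[n+r, k+r]_{r,λ}`, and using
`⟨-y⟩_{k,λ} = (-1)^k (y)_{k,λ}` together with the defining identity of `{k+r, j+r}_{r,λ}`,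
expresses `(-1)^n (u)_n` as `∑_j c_j (u)_j` with `c_j = ∑_k (-1)^k [n+r, k+r]_{r,λ} {k+r, j+r}_{r,λ}`.
The falling factorials are triangular on the naturals (`(m)_j = 0` for `m < j`, `(j)_j ≠ 0`),
so `c_j = (-1)^n δ_{jn}`: the signed Stirling matrices are mutually inverse, and the theorem is
this inversion applied to the sequence `∏_{i=1}^{j} (λ - i) / (j+1)^p`.
-/

lemma degRise_neg (lam x : ℝ) (k : ℕ) : degRise lam (-x) k = (-1) ^ k * degFall lam x k := by
  rw [degRise, degFall, ← card_range k, ← prod_const, card_range, ← prod_mul_distrib]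
  exact prod_congr rfl fun i _ => by ring

lemma degFall_one_natCast_of_lt {m j : ℕ} (h : m < j) : degFall 1 (m : ℝ) j = 0 :=
  prod_eq_zero (mem_range.mpr h) (by simp)

lemma degFall_one_natCast_self_pos (j : ℕ) : 0 < degFall 1 (j : ℝ) j :=
  prod_pos fun i hi => by
    have : (i : ℝ) < j := by exact_mod_cast mem_range.mp hi
    linarith

lemma eq_zero_of_sum_mul_degFall_one_natCast_eq_zero {N : ℕ} {c : ℕ → ℝ}
    (h : ∀ m < N, ∑ j ∈ range N, c j * degFall 1 (m : ℝ) j = 0) : ∀ j < N, c j = 0 := by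
  intro j
  induction j using Nat.strong_induction_on with
  | _ j ih =>
    intro hj
    have hsum := h j hj
    rw [sum_eq_single j
      (fun i _ hij => by
        rcases lt_or_gt_of_ne hij with hlt | hgt
        · rw [ih i hlt (hlt.trans hj), zero_mul]
        · rw [degFall_one_natCast_of_lt hgt, mul_zero])
      (fun hj' => absurd (mem_range.mpr hj) hj')] at hsum
    exact (mul_eq_zero.mp hsum).resolve_right (degFall_one_natCast_self_pos j).ne'

lemma sum_range_succ_sum_range_succ_comm {M : Type*} [AddCommMonoid M] (f : ℕ → ℕ → M) (n : ℕ) :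
    ∑ k ∈ range (n + 1), ∑ j ∈ range (k + 1), f k j
      = ∑ j ∈ range (n + 1), ∑ k ∈ Icc j n, f k j :=
  sum_comm' fun k j => by simp only [mem_range, mem_Icc]; omega

/-- Entry `(n, j)` of `[·, ·] · diag((-1)^k) · {·, ·}`; the sum starts at `k = j` because the
defining identity of `{·, ·}` leaves `S2 k j` unconstrained for `j > k`. -/
def inversionCoeff (S1 S2 : ℕ → ℕ → ℝ) (n j : ℕ) : ℝ :=
  ∑ k ∈ Icc j n, S1 n k * (-1) ^ k * S2 k j

lemma sum_mul_signed_sum_eq_sum_inversionCoeff_mul (S1 S2 : ℕ → ℕ → ℝ) (a : ℕ → ℝ) (n : ℕ) :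
    ∑ k ∈ range (n + 1), S1 n k * ((-1) ^ k * ∑ j ∈ range (k + 1), S2 k j * a j)
      = ∑ j ∈ range (n + 1), inversionCoeff S1 S2 n j * a j := by
  simp only [mul_sum, inversionCoeff, sum_mul]
  rw [sum_range_succ_sum_range_succ_comm]
  exact sum_congr rfl fun j _ => sum_congr rfl fun k _ => by ring

section Inversion

variable {lam : ℝ} {r : ℕ} {S1 S2 : ℕ → ℕ → ℝ}
  (hS1 : ∀ (n : ℕ) (x : ℝ),
    degRise 1 (x + r) n = ∑ k ∈ range (n + 1), S1 n k * degRise lam x k)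
  (hS2 : ∀ (n : ℕ) (x : ℝ),
    degFall lam (x + r) n = ∑ k ∈ range (n + 1), S2 n k * degFall 1 x k)
include hS1 hS2

lemma sum_inversionCoeff_mul_degFall_one (n : ℕ) (u : ℝ) :
    ∑ j ∈ range (n + 1), inversionCoeff S1 S2 n j * degFall 1 u j = (-1) ^ n * degFall 1 u n := by
  have h := hS1 n (-(u + r))
  rw [show -(u + r) + (r : ℝ) = -u by ring] at h
  simp only [degRise_neg, hS2] at h
  rw [← sum_mul_signed_sum_eq_sum_inversionCoeff_mul, ← h]

lemma inversionCoeff_eq {n j : ℕ} (hj : j ≤ n) :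
    inversionCoeff S1 S2 n j = if j = n then (-1) ^ n else 0 := by
  have hdiff : ∀ m < n + 1, ∑ j ∈ range (n + 1),
      (inversionCoeff S1 S2 n j - if j = n then (-1) ^ n else 0) * degFall 1 (m : ℝ) j = 0 := by
    intro m _
    simp only [sub_mul, sum_sub_distrib, ite_mul, zero_mul, sum_ite_eq', mem_range,
      Nat.lt_succ_self, if_true, sum_inversionCoeff_mul_degFall_one hS1 hS2, sub_self]
  exact sub_eq_zero.mp (eq_zero_of_sum_mul_degFall_one_natCast_eq_zero hdiff j (by omega))

theorem sum_mul_signed_sum_eq (a : ℕ → ℝ) (n : ℕ) :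
    ∑ k ∈ range (n + 1), S1 n k * ((-1) ^ k * ∑ j ∈ range (k + 1), S2 k j * a j)
      = (-1) ^ n * a n := by
  rw [sum_mul_signed_sum_eq_sum_inversionCoeff_mul, sum_congr rfl fun j hj => by
    rw [inversionCoeff_eq hS1 hS2 (Nat.lt_succ_iff.mp (mem_range.mp hj))]]
  simp

end Inversion

/-- With `β^{(p)}_{k,λ}(−r) = (−1)^k ∑_{j=0}^{k} (∏_{i=1}^{j} (λ−i)) {k+r,j+r}_{r,λ} / (j+1)^p`
(the degenerate poly-Bernoulli polynomial of index `p` at `−r`), we have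
`(−1)^n (∏_{i=1}^{n} (λ−i)) / (n+1)^p = ∑_{k=0}^{n} [n+r,k+r]_{r,λ} β^{(p)}_{k,λ}(−r)`. -/
theorem degenerate_poly_bernoulli_identity (lam : ℝ) (r : ℕ) (p : ℤ) (S1 S2 : ℕ → ℕ → ℝ)
    (hS1 : ∀ (n : ℕ) (x : ℝ),
      degRise 1 (x + r) n = ∑ k ∈ range (n + 1), S1 n k * degRise lam x k)
    (hS2 : ∀ (n : ℕ) (x : ℝ),
      degFall lam (x + r) n = ∑ k ∈ range (n + 1), S2 n k * degFall 1 x k)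
    (β : ℕ → ℝ)
    (hβ : ∀ k : ℕ, β k = (-1 : ℝ) ^ k *
      ∑ j ∈ range (k + 1),
        (∏ i ∈ Finset.Icc 1 j, (lam - (i : ℝ))) * S2 k j / ((j : ℝ) + 1) ^ p) :
    ∀ n : ℕ, (-1 : ℝ) ^ n * (∏ i ∈ Finset.Icc 1 n, (lam - (i : ℝ))) / ((n : ℝ) + 1) ^ p
      = ∑ k ∈ range (n + 1), S1 n k * β k := by
  intro n
  have hβ' : ∀ k, β k = (-1) ^ k * ∑ j ∈ range (k + 1),
      S2 k j * ((∏ i ∈ Icc 1 j, (lam - (i : ℝ))) / ((j : ℝ) + 1) ^ p) := fun k => by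
    rw [hβ k]
    exact congrArg _ (sum_congr rfl fun j _ => by ring)
  simp only [hβ']
  rw [sum_mul_signed_sum_eq hS1 hS2, mul_div_assoc]
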